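/- Let (Ω, ℱ, P) be a probability space and let X, Y : Ω → ℕ be random variables taking values in the natural numbers. Then for all t₁, t₂ ∈ ℝ, |E[e^{i(t₁X + t₂Y)}] − 1 − (e^{it₁} − 1)·P(X = 1, Y = 0) − (e^{it₂} − 1)·P(X = 0, Y = 1)| ≤ 2·(P(X ≥ 2) + P(Y ≥ 2) + P(X ≥ 1, Y ≥ 1)). -/

import Mathlib

open MeasureTheory Complex

/-!
For `m, n ∈ ℕ` the quantity `e^{i(t₁m + t₂n)} - 1 - (e^{it₁} - 1)·[m = 1, n = 0] - (e^{it₂} - 1)·[m = 0, n = 1]`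
vanishes when `(m, n) ∈ {(0,0), (1,0), (0,1)}`; otherwise it is `e^{i(t₁m + t₂n)} - 1`, of modulus
at most `2`, while one of the events `m ≥ 2`, `n ≥ 2`, `m, n ≥ 1` occurs. Evaluating at `(X, Y)` and
integrating gives the bound.
-/

lemma norm_exp_I_mul_ofReal_sub_one_le_two (x : ℝ) : ‖exp (I * x) - 1‖ ≤ 2 :=
  (norm_sub_le _ _).trans (by simp [norm_exp_I_mul_ofReal]; norm_num)

lemma norm_exp_I_mul_nat_pair_sub_le (t₁ t₂ : ℝ) (m n : ℕ) :
    ‖exp (I * (t₁ * m + t₂ * n)) - 1 - (if m = 1 ∧ n = 0 then exp (I * t₁) - 1 else 0) -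
        (if m = 0 ∧ n = 1 then exp (I * t₂) - 1 else 0)‖ ≤
      2 * ((if 2 ≤ m then 1 else 0) + (if 2 ≤ n then 1 else 0) +
        (if 1 ≤ m ∧ 1 ≤ n then 1 else 0) : ℝ) := by
  by_cases h : 2 ≤ m ∨ 2 ≤ n ∨ (1 ≤ m ∧ 1 ≤ n)
  · have h₁ : ¬(m = 1 ∧ n = 0) := by omega
    have h₂ : ¬(m = 0 ∧ n = 1) := by omega
    have hRHS : (2 : ℝ) ≤ 2 * ((if 2 ≤ m then 1 else 0) + (if 2 ≤ n then 1 else 0) +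
        (if 1 ≤ m ∧ 1 ≤ n then 1 else 0)) := by
      split_ifs <;> norm_num
      omega
    rw [if_neg h₁, if_neg h₂, sub_zero, sub_zero]
    calc _ = ‖exp (I * ↑(t₁ * m + t₂ * n)) - 1‖ := by push_cast; rfl
      _ ≤ 2 := norm_exp_I_mul_ofReal_sub_one_le_two _
      _ ≤ _ := hRHS
  · have : (m = 0 ∨ m = 1) ∧ (n = 0 ∨ n = 1) ∧ ¬(m = 1 ∧ n = 1) := by omega
    obtain ⟨rfl | rfl, rfl | rfl, -⟩ := this <;> simp_all

section

variable {Ω : Type*} [MeasurableSpace Ω] {μ : Measure Ω}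

lemma measurableSet_setOf_pair {α β : Type*} [MeasurableSpace α] [MeasurableSpace β]
    [DiscreteMeasurableSpace (α × β)] {X : Ω → α} {Y : Ω → β}
    (hX : Measurable X) (hY : Measurable Y) (p : α → β → Prop) :
    MeasurableSet {ω | p (X ω) (Y ω)} :=
  hX.prodMk hY (MeasurableSet.of_discrete (s := {q : α × β | p q.1 q.2}))

variable [IsFiniteMeasure μ]

lemma integral_sub_indicator_const {E : Type*} [NormedAddCommGroup E] [NormedSpace ℝ E]
    [CompleteSpace E] {f : Ω → E} (hf : Integrable f μ) {s : Set Ω} (hs : MeasurableSet s)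
    (c : E) :
    ∫ ω, f ω - s.indicator (fun _ ↦ c) ω ∂μ = ∫ ω, f ω ∂μ - μ.real s • c := by
  rw [integral_sub hf ((integrable_const c).indicator hs), integral_indicator_const c hs]

lemma integral_sub_const_sub_indicator_const_sub_indicator_const {E : Type*}
    [NormedAddCommGroup E] [NormedSpace ℝ E] [CompleteSpace E] {f : Ω → E} (hf : Integrable f μ)
    {s t : Set Ω} (hs : MeasurableSet s) (ht : MeasurableSet t) (b c d : E) :
    ∫ ω, f ω - b - s.indicator (fun _ ↦ c) ω - t.indicator (fun _ ↦ d) ω ∂μ =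
      ∫ ω, f ω ∂μ - μ.real Set.univ • b - μ.real s • c - μ.real t • d := by
  have hfb : Integrable (fun ω ↦ f ω - b) μ := hf.sub (integrable_const b)
  have hfbc : Integrable (fun ω ↦ f ω - b - s.indicator (fun _ ↦ c) ω) μ :=
    hfb.sub ((integrable_const c).indicator hs)
  rw [integral_sub_indicator_const hfbc ht,
    integral_sub_indicator_const hfb hs, integral_sub hf (integrable_const b), integral_const]

lemma integral_indicator_one_add_indicator_one_add_indicator_one {r s t : Set Ω}
    (hr : MeasurableSet r) (hs : MeasurableSet s) (ht : MeasurableSet t) :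
    ∫ ω, r.indicator 1 ω + s.indicator 1 ω + t.indicator 1 ω ∂μ =
      μ.real r + μ.real s + μ.real t := by
  have hind {u : Set Ω} (hu : MeasurableSet u) : Integrable (u.indicator (1 : Ω → ℝ)) μ :=
    (integrable_const 1).indicator hu
  have hrs : Integrable (fun ω ↦ r.indicator (1 : Ω → ℝ) ω + s.indicator 1 ω) μ :=
    (hind hr).add (hind hs)
  rw [integral_add hrs (hind ht), integral_add (hind hr) (hind hs),
    integral_indicator_one hr, integral_indicator_one hs, integral_indicator_one ht]

end

/-- For `ℕ`-valued random variables `X, Y` on a probability space and all `t₁, t₂ ∈ ℝ`,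
`|E[e^{i(t₁X + t₂Y)}] - 1 - (e^{it₁} - 1)·P(X = 1, Y = 0) - (e^{it₂} - 1)·P(X = 0, Y = 1)|
  ≤ 2·(P(X ≥ 2) + P(Y ≥ 2) + P(X ≥ 1, Y ≥ 1))`. -/
theorem charFun_expansion_pair
    {Ω : Type*} [MeasurableSpace Ω] (P : Measure Ω) [IsProbabilityMeasure P]
    (X Y : Ω → ℕ) (hX : Measurable X) (hY : Measurable Y) :
    ∀ t₁ t₂ : ℝ,
      ‖(∫ ω, Complex.exp (Complex.I * (t₁ * (X ω : ℂ) + t₂ * (Y ω : ℂ))) ∂P) - 1 -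
          (Complex.exp (Complex.I * t₁) - 1) *
            ((P {ω | X ω = 1 ∧ Y ω = 0}).toReal : ℂ) -
          (Complex.exp (Complex.I * t₂) - 1) *
            ((P {ω | X ω = 0 ∧ Y ω = 1}).toReal : ℂ)‖ ≤
        2 * ((P {ω | 2 ≤ X ω}).toReal + (P {ω | 2 ≤ Y ω}).toReal +
          (P {ω | 1 ≤ X ω ∧ 1 ≤ Y ω}).toReal) := by
  intro t₁ t₂
  have hmeas := measurableSet_setOf_pair hX hY
  have hB₁ := hmeas fun m _ ↦ 2 ≤ m
  have hB₂ := hmeas fun _ n ↦ 2 ≤ n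
  have hB₃ := hmeas fun m n ↦ 1 ≤ m ∧ 1 ≤ n
  set f : Ω → ℂ := fun ω ↦ exp (I * (t₁ * (X ω : ℂ) + t₂ * (Y ω : ℂ)))
  have hf : Integrable f P := by
    refine .of_bound (by fun_prop) 1 (.of_forall fun ω ↦ le_of_eq ?_)
    simpa using norm_exp_I_mul_ofReal (t₁ * X ω + t₂ * Y ω)
  calc _ = ‖∫ ω, f ω - 1 - {ω | X ω = 1 ∧ Y ω = 0}.indicator (fun _ ↦ exp (I * t₁) - 1) ω -
          {ω | X ω = 0 ∧ Y ω = 1}.indicator (fun _ ↦ exp (I * t₂) - 1) ω ∂P‖ := by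
        rw [integral_sub_const_sub_indicator_const_sub_indicator_const hf
          (hmeas fun m n ↦ m = 1 ∧ n = 0) (hmeas fun m n ↦ m = 0 ∧ n = 1)]
        simp [measureReal_def, mul_comm]
    _ ≤ ∫ ω, 2 * ({ω | 2 ≤ X ω}.indicator 1 ω + {ω | 2 ≤ Y ω}.indicator 1 ω +
          {ω | 1 ≤ X ω ∧ 1 ≤ Y ω}.indicator 1 ω) ∂P := by
        refine norm_integral_le_of_norm_le (Integrable.const_mul ?_ 2) (.of_forall fun ω ↦ ?_)
        · exact (((integrable_const 1).indicator hB₁).add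
            ((integrable_const 1).indicator hB₂)).add ((integrable_const 1).indicator hB₃)
        · simpa [Set.indicator_apply] using norm_exp_I_mul_nat_pair_sub_le t₁ t₂ (X ω) (Y ω)
    _ = _ := by
        rw [integral_const_mul,
          integral_indicator_one_add_indicator_one_add_indicator_one hB₁ hB₂ hB₃]
        simp [measureReal_def]
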